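/- arXiv:2104.08046 — 2 statements merged into one kernel-verified Lean document; each statement's English description precedes it below -/
import Mathlib

section
/- Quadratic bound for sliding (Theorem 'sliding', abstract version): let f be C¹, y ∈ X₀ with X₀ convex and bounded, f(y) ≠ 0, B invertible with first column f(y), A = B⁻¹. Suppose Δt ⊆ ℝ is an interval with diam(Δt) ≤ K·diam(X₀) and Δt ⊆ [-K·diam(X₀), K·diam(X₀)] for a constant K. Then for every x ∈ X₀ and t ∈ Δt, the components 2,…,n of A f(x) t are bounded in absolute value by C·diam(X₀)² for some constant C depending only on f, A, K and a bound on X₀. -/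
/-! Since `A f(y) = e₁`, the components `i ≥ 2` of `A f(x)` are those of `A f(x) - A f(y)`.
The map `x ↦ A f(x)` is `C¹`, hence Lipschitz on the bounded set `X₀`, so these components are
`O(diam X₀)`; multiplying by `|t| ≤ K diam X₀` gives the quadratic bound. -/

open Metric NNReal Matrix

theorem LocallyLipschitz.exists_lipschitzOnWith_of_isBounded {α β : Type*}
    [PseudoMetricSpace α] [ProperSpace α] [PseudoMetricSpace β] {f : α → β}
    (hf : LocallyLipschitz f) {s : Set α} (hs : Bornology.IsBounded s) :
    ∃ K, LipschitzOnWith K f s := by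
  obtain ⟨K, hK⟩ :=
    hf.locallyLipschitzOn.exists_lipschitzOnWith_of_compact hs.isCompact_closure
  exact ⟨K, hK.mono subset_closure⟩

theorem LipschitzOnWith.dist_le_mul_diam {α β : Type*} [PseudoMetricSpace α]
    [PseudoMetricSpace β] {f : α → β} {K : ℝ≥0} {s : Set α} (hf : LipschitzOnWith K f s)
    (hs : Bornology.IsBounded s) {x y : α} (hx : x ∈ s) (hy : y ∈ s) :
    dist (f x) (f y) ≤ K * diam s :=
  (hf.dist_le_mul x hx y hy).trans <|
    mul_le_mul_of_nonneg_left (dist_le_diam_of_mem hs hx hy) K.coe_nonneg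

theorem Matrix.inv_mulVec_col {ι R : Type*} [Fintype ι] [DecidableEq ι] [CommRing R]
    {B : Matrix ι ι R} (hB : IsUnit B) (j : ι) : B⁻¹ *ᵥ B.col j = Pi.single j 1 := by
  rw [← mulVec_single_one, mulVec_mulVec, nonsing_inv_mul B ((isUnit_iff_isUnit_det B).mp hB),
    one_mulVec]

theorem quadratic_sliding_bound_general {n : ℕ} [NeZero n]
    (f : (Fin n → ℝ) → (Fin n → ℝ)) (hf : ContDiff ℝ 1 f)
    (X₀ : Set (Fin n → ℝ)) (hbdd : Bornology.IsBounded X₀)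
    (y : Fin n → ℝ) (hy : y ∈ X₀)
    (B : Matrix (Fin n) (Fin n) ℝ) (hB : IsUnit B)
    (hcol : ∀ i, B i 0 = f y i)
    (A : Matrix (Fin n) (Fin n) ℝ) (hA : A = B⁻¹)
    (Δt : Set ℝ) (K : ℝ) (hK : 0 < K)
    (hΔsub : Δt ⊆ Set.Icc (-(K * Metric.diam X₀)) (K * Metric.diam X₀)) :
    ∃ C > 0, ∀ x ∈ X₀, ∀ t ∈ Δt, ∀ i : Fin n, i ≠ 0 →
      |t * A.mulVec (f x) i| ≤ C * Metric.diam X₀ ^ 2 := by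
  have hAf : ContDiff ℝ 1 (fun x => A *ᵥ f x) :=
    (mulVecLin A).toContinuousLinearMap.contDiff.comp hf
  obtain ⟨L, hL⟩ := hAf.locallyLipschitz.exists_lipschitzOnWith_of_isBounded hbdd
  have hAfy : A *ᵥ f y = Pi.single 0 1 := by
    have hfy : f y = B.col 0 := funext fun i => (hcol i).symm
    rw [hA, hfy, inv_mulVec_col hB]
  refine ⟨K * L + 1, by positivity, fun x hx t ht i hi => ?_⟩
  have ht : |t| ≤ K * diam X₀ := abs_le.2 (hΔsub ht)
  have hcomp : |(A *ᵥ f x) i| ≤ L * diam X₀ :=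
    calc |(A *ᵥ f x) i| = dist ((A *ᵥ f x) i) ((A *ᵥ f y) i) := by
          simp [hAfy, Pi.single_eq_of_ne hi]
      _ ≤ dist (A *ᵥ f x) (A *ᵥ f y) := dist_le_pi_dist _ _ i
      _ ≤ L * diam X₀ := hL.dist_le_mul_diam hbdd hx hy
  calc |t * (A *ᵥ f x) i| = |t| * |(A *ᵥ f x) i| := abs_mul _ _
    _ ≤ (K * diam X₀) * (L * diam X₀) := mul_le_mul ht hcomp (abs_nonneg _) (by positivity)
    _ ≤ (K * L + 1) * diam X₀ ^ 2 := by nlinarith [sq_nonneg (diam X₀)]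

/-- Quadratic sliding bound (abstract version of the sliding theorem): if `Δt` has
diameter `O(diam X₀)` and is contained in `[-K diam X₀, K diam X₀]`, then for `x ∈ X₀`
and `t ∈ Δt` the components `2,…,n` of `A f(x)·t` are `O(diam(X₀)²)`. -/
theorem quadratic_sliding_bound {n : ℕ} [NeZero n]
    (f : (Fin n → ℝ) → (Fin n → ℝ)) (hf : ContDiff ℝ 1 f)
    (X₀ : Set (Fin n → ℝ)) (hconv : Convex ℝ X₀) (hbdd : Bornology.IsBounded X₀)
    (y : Fin n → ℝ) (hy : y ∈ X₀) (hfy : f y ≠ 0)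
    (B : Matrix (Fin n) (Fin n) ℝ) (hB : IsUnit B)
    (hcol : ∀ i, B i 0 = f y i)
    (A : Matrix (Fin n) (Fin n) ℝ) (hA : A = B⁻¹)
    (Δt : Set ℝ) (K : ℝ) (hK : 0 < K)
    (hΔdiam : Metric.diam Δt ≤ K * Metric.diam X₀)
    (hΔsub : Δt ⊆ Set.Icc (-(K * Metric.diam X₀)) (K * Metric.diam X₀)) :
    ∃ C > 0, ∀ x ∈ X₀, ∀ t ∈ Δt, ∀ i : Fin n, i ≠ 0 →
      |t * A.mulVec (f x) i| ≤ C * Metric.diam X₀ ^ 2 :=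
  quadratic_sliding_bound_general f hf X₀ hbdd y hy B hB hcol A hA Δt K hK hΔsub
end

section
/- Transversality gives a local graph structure for the crossing time: if f is C¹, α is C¹ with α(x₀) = 0 and ⟨Dα(x₀), f(x₀)⟩ ≠ 0, and φ(T, x₀) ∈ α⁻¹(0) with ⟨Dα(φ(T,x₀)), f(φ(T,x₀))⟩ ≠ 0, then there exist a neighborhood U of x₀ and a unique C¹ function t_Π : U → ℝ with t_Π(x₀) = T and α(φ(t_Π(x), x)) = 0 for all x ∈ U. -/
open scoped Topology

/-!
Put `F (x, t) = α (φ t x)`. Its partial derivative in `t` at `(x₀, T)` is the transversality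
number `Dα(φ(T, x₀)) (f (φ(T, x₀))) ≠ 0`, so the implicit function theorem solves `F (x, t) = 0`
for `t` as a `C¹` function of `x` near `x₀`; the local uniqueness part of that theorem forces every
continuous solution through `(x₀, T)` to agree with it near `x₀`.
-/

theorem isInvertible_fderiv_comp_inr_of_hasDerivAt
    {𝕜 E : Type*} [NontriviallyNormedField 𝕜] [NormedAddCommGroup E] [NormedSpace 𝕜 E]
    {F : E × 𝕜 → 𝕜} {u : E × 𝕜} {a : 𝕜} (hF : DifferentiableAt 𝕜 F u)
    (ha : HasDerivAt (fun t => F (u.1, t)) a u.2) (ha₀ : a ≠ 0) :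
    (fderiv 𝕜 F u ∘L .inr 𝕜 E 𝕜).IsInvertible := by
  have hpartial : (fderiv 𝕜 F u ∘L .inr 𝕜 E 𝕜) 1 = a :=
    (hF.hasFDerivAt.comp_hasDerivAt u.2
      ((hasDerivAt_const u.2 u.1).prodMk (hasDerivAt_id u.2))).unique ha
  refine ⟨ContinuousLinearEquiv.unitsEquivAut 𝕜 (.mk0 a ha₀), ?_⟩
  ext
  simp [hpartial]

namespace ContDiffAt

open scoped ContDiff

variable {𝕜 : Type*} [RCLike 𝕜]
  {E₁ : Type*} [NormedAddCommGroup E₁] [NormedSpace 𝕜 E₁] [CompleteSpace E₁]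
  {E₂ : Type*} [NormedAddCommGroup E₂] [NormedSpace 𝕜 E₂] [CompleteSpace E₂]
  {F : Type*} [NormedAddCommGroup F] [NormedSpace 𝕜 F] [CompleteSpace F]
  {u : E₁ × E₂} {f : E₁ × E₂ → F} {n : WithTop ℕ∞}

theorem exists_mem_nhds_contDiffOn_implicitFunction (cdf : ContDiffAt 𝕜 n f u) (pn : n ≠ 0)
    (if₂ : (fderiv 𝕜 f u ∘L .inr 𝕜 E₁ E₂).IsInvertible) (hn : n ≠ ∞) :
    ∃ U ∈ 𝓝 u.1, ContDiffOn 𝕜 n (cdf.implicitFunction pn if₂) U ∧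
      ∀ x ∈ U, f (x, cdf.implicitFunction pn if₂ x) = f u :=
  ⟨_, ((cdf.contDiffAt_implicitFunction pn if₂).eventually hn).and
      (cdf.eventually_apply_implicitFunction pn if₂),
    fun _ hx => hx.1.contDiffWithinAt, fun _ hx => hx.2⟩

theorem eventuallyEq_implicitFunction (cdf : ContDiffAt 𝕜 n f u) (pn : n ≠ 0)
    (if₂ : (fderiv 𝕜 f u ∘L .inr 𝕜 E₁ E₂).IsInvertible) {s : E₁ → E₂}
    (hs : ContinuousAt s u.1) (hsu : s u.1 = u.2) (hfs : ∀ᶠ x in 𝓝 u.1, f (x, s x) = f u) :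
    s =ᶠ[𝓝 u.1] cdf.implicitFunction pn if₂ := by
  have hgraph : Filter.Tendsto (fun x => (x, s x)) (𝓝 u.1) (𝓝 u) := by
    simpa [hsu] using (continuousAt_id.prodMk hs).tendsto
  filter_upwards [hgraph.eventually (cdf.eventually_apply_eq_iff_implicitFunction pn if₂), hfs]
    with x hiff hx
  exact (hiff.mp hx).symm

end ContDiffAt

theorem crossing_time_implicit_function_general {n : ℕ}
    (f : (Fin n → ℝ) → (Fin n → ℝ))
    (φ : ℝ → (Fin n → ℝ) → (Fin n → ℝ))
    (hsmooth : ContDiff ℝ 1 (fun p : ℝ × (Fin n → ℝ) => φ p.1 p.2))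
    (hflow : ∀ t x, HasDerivAt (fun τ => φ τ x) (f (φ t x)) t)
    (α : (Fin n → ℝ) → ℝ) (hα : ContDiff ℝ 1 α)
    (x₀ : Fin n → ℝ)
    (T : ℝ) (hcross : α (φ T x₀) = 0)
    (htransT : fderiv ℝ α (φ T x₀) (f (φ T x₀)) ≠ 0) :
    ∃ U ∈ 𝓝 x₀, ∃ tPi : (Fin n → ℝ) → ℝ,
      ContDiffOn ℝ 1 tPi U ∧ tPi x₀ = T ∧ (∀ x ∈ U, α (φ (tPi x) x) = 0) ∧
      ∀ s : (Fin n → ℝ) → ℝ, ContinuousOn s U → s x₀ = T →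
        (∀ x ∈ U, α (φ (s x) x) = 0) → ∀ᶠ x in 𝓝 x₀, s x = tPi x := by
  set F : (Fin n → ℝ) × ℝ → ℝ := fun p => α (φ p.2 p.1)
  have hF : ContDiff ℝ 1 F := hα.comp (hsmooth.comp (contDiff_snd.prodMk contDiff_fst))
  have hcrossing : HasDerivAt (fun t => F (x₀, t)) (fderiv ℝ α (φ T x₀) (f (φ T x₀))) T :=
    (hα.differentiable one_ne_zero _).hasFDerivAt.comp_hasDerivAt T (hflow T x₀)
  have hinv := isInvertible_fderiv_comp_inr_of_hasDerivAt (u := (x₀, T))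
    (hF.differentiable one_ne_zero _) hcrossing htransT
  have cdf : ContDiffAt ℝ 1 F (x₀, T) := hF.contDiffAt
  obtain ⟨U, hU, hψ, hzero⟩ :=
    cdf.exists_mem_nhds_contDiffOn_implicitFunction one_ne_zero hinv (by decide)
  refine ⟨U, hU, cdf.implicitFunction one_ne_zero hinv, hψ,
    cdf.implicitFunction_apply_self one_ne_zero hinv, fun x hx => (hzero x hx).trans hcross, ?_⟩
  intro s hs hsT hsU
  exact cdf.eventuallyEq_implicitFunction one_ne_zero hinv (hs.continuousAt hU) hsT
    (Filter.eventually_of_mem hU fun x hx => (hsU x hx).trans hcross.symm)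

/-- Transversality gives a local graph structure for the crossing time: near a transversal
crossing there is a unique C¹ return-time function `t_Π` with `t_Π x₀ = T` and
`α(φ(t_Π(x),x)) = 0`. -/
theorem crossing_time_implicit_function {n : ℕ}
    (f : (Fin n → ℝ) → (Fin n → ℝ)) (hf : ContDiff ℝ 1 f)
    (φ : ℝ → (Fin n → ℝ) → (Fin n → ℝ))
    (hsmooth : ContDiff ℝ 1 (fun p : ℝ × (Fin n → ℝ) => φ p.1 p.2))
    (hflow : ∀ t x, HasDerivAt (fun τ => φ τ x) (f (φ t x)) t)
    (hinit : ∀ x, φ 0 x = x)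
    (α : (Fin n → ℝ) → ℝ) (hα : ContDiff ℝ 1 α)
    (x₀ : Fin n → ℝ) (hαx₀ : α x₀ = 0)
    (T : ℝ) (hcross : α (φ T x₀) = 0)
    (htrans₀ : fderiv ℝ α x₀ (f x₀) ≠ 0)
    (htransT : fderiv ℝ α (φ T x₀) (f (φ T x₀)) ≠ 0) :
    ∃ U ∈ 𝓝 x₀, ∃ tPi : (Fin n → ℝ) → ℝ,
      ContDiffOn ℝ 1 tPi U ∧ tPi x₀ = T ∧ (∀ x ∈ U, α (φ (tPi x) x) = 0) ∧
      ∀ s : (Fin n → ℝ) → ℝ, ContinuousOn s U → s x₀ = T →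
        (∀ x ∈ U, α (φ (s x) x) = 0) → ∀ᶠ x in 𝓝 x₀, s x = tPi x :=
  crossing_time_implicit_function_general f φ hsmooth hflow α hα x₀ T hcross htransT
end
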